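/- arXiv:1906.03712 — 4 statements merged into one kernel-verified Lean document; each statement's English description precedes it below -/
import Mathlib

section
/- For δ > 0, the pair of constant functions ρ = m₁/|Ω|, η = m₂/|Ω| is the unique minimiser of F_L(ρ,η) = ((1+δ)/2)∫_Ω(ρ+η)² dx − δ∫_Ω ρη dx over the set X of pairs of nonnegative L² functions with ∫_Ω ρ = m₁ and ∫_Ω η = m₂. -/
open MeasureTheory

/-- The local energy `F_L(ρ,η) = ((1+δ)/2)∫_Ω (ρ+η)² − δ∫_Ω ρη`. -/
noncomputable def FL (Ω : Set ℝ) (δ : ℝ) (ρ η : ℝ → ℝ) : ℝ :=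
  ((1+δ)/2) * (∫ x in Ω, (ρ x + η x)^2) - δ * ∫ x in Ω, ρ x * η x

/-- The admissible set X: nonnegative L² densities with prescribed masses. -/
def InX (Ω : Set ℝ) (m₁ m₂ : ℝ) (ρ η : ℝ → ℝ) : Prop :=
  MemLp ρ 2 (volume.restrict Ω) ∧ MemLp η 2 (volume.restrict Ω) ∧
  (∀ᵐ x ∂(volume.restrict Ω), 0 ≤ ρ x) ∧ (∀ᵐ x ∂(volume.restrict Ω), 0 ≤ η x) ∧
  (∫ x in Ω, ρ x) = m₁ ∧ (∫ x in Ω, η x) = m₂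

/-!
Since `∫ ρη = (∫ (ρ+η)² - ∫ ρ² - ∫ η²) / 2`, the energy is `F_L = ½ ∫ (ρ+η)² + (δ/2)(∫ ρ² + ∫ η²)`.
Each integral of a square exceeds its value at the mean by the variance `∫ (f - f̄)²`, and the
masses fix the means of `ρ`, `η` and `ρ + η`. Hence `F_L` minus its value at the constant pair is a
nonnegative combination of three variances, and for `δ > 0` it vanishes only when `ρ` and `η` are
a.e. constant.
-/

open Set

section Mean

variable {α : Type*} [MeasurableSpace α] {μ : Measure α} [IsFiniteMeasure μ] {f : α → ℝ}

theorem integral_sq_sub_mean (hf : MemLp f 2 μ) :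
    ∫ x, (f x - (∫ y, f y ∂μ) / μ.real univ) ^ 2 ∂μ
      = ∫ x, f x ^ 2 ∂μ - (∫ x, f x ∂μ) ^ 2 / μ.real univ := by
  set V := μ.real univ
  set m := ∫ y, f y ∂μ
  have hsq : Integrable (fun x => f x ^ 2) μ := hf.integrable_sq
  have hlin : Integrable (fun x => 2 * (m / V) * f x) μ :=
    (hf.integrable one_le_two).const_mul _
  have hexpand : ∀ x, (f x - m / V) ^ 2 = f x ^ 2 - 2 * (m / V) * f x + (m / V) ^ 2 := by
    intro x; ring
  have hdiff : Integrable (fun x => f x ^ 2 - 2 * (m / V) * f x) μ := hsq.sub hlin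
  simp_rw [hexpand]
  rw [integral_add hdiff (integrable_const _), integral_sub hsq hlin,
    integral_const_mul, integral_const, smul_eq_mul]
  rcases eq_or_ne V 0 with hV | hV
  · simp [hV]
  · field_simp
    ring

theorem ae_eq_const_of_integral_sq_sub_eq_zero {c : ℝ} (hf : MemLp f 2 μ)
    (h : ∫ x, (f x - c) ^ 2 ∂μ = 0) : f =ᵐ[μ] fun _ => c := by
  have hint : Integrable (fun x => (f x - c) ^ 2) μ := (hf.sub (memLp_const c)).integrable_sq
  filter_upwards [(integral_eq_zero_iff_of_nonneg (fun x => sq_nonneg _) hint).mp h] with x hx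
  exact sub_eq_zero.mp (pow_eq_zero_iff two_ne_zero |>.mp hx)

end Mean

section LocalEnergy

variable {Ω : Set ℝ} {δ m₁ m₂ : ℝ} {ρ η : ℝ → ℝ}

theorem FL_eq_of_memLp (hρ : MemLp ρ 2 (volume.restrict Ω)) (hη : MemLp η 2 (volume.restrict Ω)) :
    FL Ω δ ρ η = 1 / 2 * (∫ x in Ω, (ρ x + η x) ^ 2)
      + δ / 2 * ((∫ x in Ω, ρ x ^ 2) + ∫ x in Ω, η x ^ 2) := by
  have hρ2 := hρ.integrable_sq
  have hη2 := hη.integrable_sq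
  have hprod : Integrable (fun x => ρ x * η x) (volume.restrict Ω) := hρ.integrable_mul hη
  have hexpand : ∫ x in Ω, (ρ x + η x) ^ 2
      = (∫ x in Ω, ρ x ^ 2) + (∫ x in Ω, η x ^ 2) + 2 * ∫ x in Ω, ρ x * η x := by
    have hsq : Integrable (fun x => ρ x ^ 2 + η x ^ 2) (volume.restrict Ω) := hρ2.add hη2
    simp_rw [add_sq', mul_assoc]
    rw [integral_add hsq (hprod.const_mul 2), integral_add hρ2 hη2,
      integral_const_mul]
  rw [FL, hexpand]
  ring

variable [IsFiniteMeasure (volume.restrict Ω)]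

theorem inX_const (hV : volume.real Ω ≠ 0) (hm₁ : 0 ≤ m₁) (hm₂ : 0 ≤ m₂) :
    InX Ω m₁ m₂ (fun _ => m₁ / volume.real Ω) (fun _ => m₂ / volume.real Ω) := by
  refine ⟨memLp_const _, memLp_const _, .of_forall fun _ => by positivity,
    .of_forall fun _ => by positivity, ?_, ?_⟩ <;>
  · rw [integral_const, smul_eq_mul, measureReal_restrict_apply_univ]
    field_simp

theorem FL_sub_FL_const (h : InX Ω m₁ m₂ ρ η) :
    FL Ω δ ρ η - FL Ω δ (fun _ => m₁ / volume.real Ω) (fun _ => m₂ / volume.real Ω)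
      = 1 / 2 * (∫ x in Ω, (ρ x + η x - (m₁ + m₂) / volume.real Ω) ^ 2)
        + δ / 2 * ((∫ x in Ω, (ρ x - m₁ / volume.real Ω) ^ 2)
          + ∫ x in Ω, (η x - m₂ / volume.real Ω) ^ 2) := by
  obtain ⟨hρ, hη, -, -, rfl, rfl⟩ := h
  have hsum : ∫ x in Ω, (ρ x + η x) = (∫ x in Ω, ρ x) + ∫ x in Ω, η x :=
    integral_add (hρ.integrable one_le_two) (hη.integrable one_le_two)
  have hmean := @integral_sq_sub_mean _ _ (volume.restrict Ω) _
  rw [measureReal_restrict_apply_univ] at hmean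
  rw [← hsum, hmean (f := fun x => ρ x + η x) (hρ.add hη), hmean hρ, hmean hη, hsum,
    FL_eq_of_memLp hρ hη, FL_eq_of_memLp (memLp_const _) (memLp_const _)]
  simp only [integral_const, smul_eq_mul, measureReal_restrict_apply_univ]
  rcases eq_or_ne (volume.real Ω) 0 with hV | hV
  · simp [hV]
  · field_simp
    ring

theorem FL_const_le_of_inX (hδ : 0 ≤ δ) (h : InX Ω m₁ m₂ ρ η) :
    FL Ω δ (fun _ => m₁ / volume.real Ω) (fun _ => m₂ / volume.real Ω) ≤ FL Ω δ ρ η :=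
  sub_nonneg.mp (by rw [FL_sub_FL_const h]; positivity)

theorem ae_eq_const_of_FL_eq (hδ : 0 < δ) (h : InX Ω m₁ m₂ ρ η)
    (heq : FL Ω δ ρ η = FL Ω δ (fun _ => m₁ / volume.real Ω) (fun _ => m₂ / volume.real Ω)) :
    (ρ =ᵐ[volume.restrict Ω] fun _ => m₁ / volume.real Ω) ∧
      (η =ᵐ[volume.restrict Ω] fun _ => m₂ / volume.real Ω) := by
  have hexcess := FL_sub_FL_const (δ := δ) h
  rw [heq, sub_self] at hexcess
  have hsum : 0 ≤ ∫ x in Ω, (ρ x + η x - (m₁ + m₂) / volume.real Ω) ^ 2 := by positivity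
  have hρ : 0 ≤ ∫ x in Ω, (ρ x - m₁ / volume.real Ω) ^ 2 := by positivity
  have hη : 0 ≤ ∫ x in Ω, (η x - m₂ / volume.real Ω) ^ 2 := by positivity
  exact ⟨ae_eq_const_of_integral_sq_sub_eq_zero h.1 (by nlinarith),
    ae_eq_const_of_integral_sq_sub_eq_zero h.2.1 (by nlinarith)⟩

end LocalEnergy

/-- For δ > 0, the pair of constants (m₁/|Ω|, m₂/|Ω|) is the unique minimiser of F_L over X. -/
theorem stmt2 (a b δ m₁ m₂ : ℝ) (hab : a < b) (hδ : 0 < δ) (hm₁ : 0 < m₁) (hm₂ : 0 < m₂) :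
    InX (Set.Ioo a b) m₁ m₂ (fun _ => m₁/(b-a)) (fun _ => m₂/(b-a)) ∧
    (∀ ρ η : ℝ → ℝ, InX (Set.Ioo a b) m₁ m₂ ρ η →
      FL (Set.Ioo a b) δ (fun _ => m₁/(b-a)) (fun _ => m₂/(b-a)) ≤ FL (Set.Ioo a b) δ ρ η) ∧
    (∀ ρ η : ℝ → ℝ, InX (Set.Ioo a b) m₁ m₂ ρ η →
      FL (Set.Ioo a b) δ ρ η = FL (Set.Ioo a b) δ (fun _ => m₁/(b-a)) (fun _ => m₂/(b-a)) →
      (ρ =ᵐ[volume.restrict (Set.Ioo a b)] fun _ => m₁/(b-a)) ∧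
      (η =ᵐ[volume.restrict (Set.Ioo a b)] fun _ => m₂/(b-a))) := by
  have hV : volume.real (Ioo a b) = b - a := by simp [Real.volume_real_Ioo, hab.le]
  rw [← hV]
  exact ⟨inX_const (by linarith) hm₁.le hm₂.le, fun ρ η h => FL_const_le_of_inX hδ.le h,
    fun ρ η h heq => ae_eq_const_of_FL_eq hδ h heq⟩
end

section
/- Let Ω = (0,1) and δ ∈ (-1,0). Define ρⁿ(x) = Σ_{i=0}^{n-1} 1_{[2i/(2n), (2i+1)/(2n))}(x) (the indicator of the union of n evenly spaced intervals of width 1/(2n)) and ηⁿ = 1 − ρⁿ. Then ρⁿηⁿ = 0 a.e., ρⁿ ⇀ 1/2 and ηⁿ ⇀ 1/2 weakly in L²(0,1), F_L(ρⁿ,ηⁿ) = (1+δ)/2 for all n, but F_L(1/2, 1/2) = (1+δ)/2 − δ/4 > (1+δ)/2. Hence F_L is not sequentially weakly lower semicontinuous on L²(0,1)×L²(0,1). -/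
/-!
On `(0,1)` the oscillating part `ρⁿ - 1/2` is the square wave `sₙ(x) = ±1/2`, the sign given by
the parity of `⌊2nx⌋`, and `sₙ` changes sign under the shift by `h = 1/(2n)`. Shifting the
integral therefore gives `2 ∫ sₙ g = ∫ sₙ(x) (g x - g (x + h))`, which is at most
`‖g(· + h) - g‖₁ / 2` in absolute value; this tends to `0` by continuity of translation in `L¹`,
itself obtained by approximating `g` with continuous compactly supported functions. Since
`L²(0,1) ⊆ L¹(0,1)`, this gives the weak convergence. The energies are computed pointwise from
`ρⁿ + ηⁿ = 1` and `ρⁿ ηⁿ = 0`.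
-/

open MeasureTheory Filter

/-- The oscillating sequence: indicator of n evenly spaced intervals of width 1/(2n). -/
noncomputable def ρseq (n : ℕ) : ℝ → ℝ :=
  Set.indicator (⋃ i ∈ Finset.range n,
    Set.Ico ((2*(i:ℝ))/(2*(n:ℝ))) ((2*(i:ℝ)+1)/(2*(n:ℝ)))) 1

open Topology Metric Set Function

section Translation

variable {G E : Type*} [NormedAddCommGroup G] [ProperSpace G] [MeasurableSpace G] [BorelSpace G]
  [NormedAddCommGroup E] {μ : Measure G}

theorem HasCompactSupport.tendsto_integral_norm_comp_add_sub [IsLocallyFiniteMeasure μ]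
    {f : G → E} (hfs : HasCompactSupport f) (hf : Continuous f) :
    Tendsto (fun h => ∫ x, ‖f (x + h) - f x‖ ∂μ) (𝓝 0) (𝓝 0) := by
  set K := cthickening 1 (tsupport f)
  have hlim : Tendsto (fun h => ∫ x in K, ‖f (x + h) - f x‖ ∂μ) (𝓝 0) (𝓝 0) := by
    have := (continuous_parametric_integral_of_continuous (μ := μ)
      (f := fun h x => ‖f (x + h) - f x‖) (by fun_prop) (hfs.cthickening (r := 1))).tendsto 0
    simpa using this
  refine hlim.congr' ?_
  filter_upwards [ball_mem_nhds (0 : G) one_pos] with h hh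
  refine setIntegral_eq_integral_of_forall_compl_eq_zero fun x hx => ?_
  have hx0 : f x = 0 :=
    image_eq_zero_of_notMem_tsupport fun h' => hx (self_subset_cthickening _ h')
  have hxh : f (x + h) = 0 := image_eq_zero_of_notMem_tsupport fun h' => hx <|
    mem_cthickening_of_dist_le x (x + h) 1 _ h'
      (by simpa [dist_eq_norm] using (mem_ball_zero_iff.1 hh).le)
  simp [hx0, hxh]

theorem MeasureTheory.Integrable.tendsto_integral_norm_comp_add_sub [NormedSpace ℝ E]
    [μ.IsAddRightInvariant] [μ.Regular] {f : G → E} (hf : Integrable f μ) :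
    Tendsto (fun h => ∫ x, ‖f (x + h) - f x‖ ∂μ) (𝓝 0) (𝓝 0) := by
  refine Metric.tendsto_nhds.2 fun ε hε => ?_
  obtain ⟨φ, hφs, hfφ, hφc, hφi⟩ :=
    hf.exists_hasCompactSupport_integral_sub_le (ε := ε / 3) (by positivity)
  filter_upwards [Metric.tendsto_nhds.1 (hφs.tendsto_integral_norm_comp_add_sub (μ := μ) hφc)
    (ε / 3) (by positivity)] with h hφh
  rw [Real.dist_0_eq_abs, abs_of_nonneg (integral_nonneg fun _ => norm_nonneg _)] at hφh ⊢
  have hfh := hf.comp_add_right h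
  have hφh' := hφi.comp_add_right h
  have i₁ : Integrable (fun x => ‖f (x + h) - φ (x + h)‖) μ := (hfh.sub hφh').norm
  have i₂ : Integrable (fun x => ‖φ (x + h) - φ x‖) μ := (hφh'.sub hφi).norm
  have i₃ : Integrable (fun x => ‖f x - φ x‖) μ := (hf.sub hφi).norm
  have htri : ∀ x, ‖f (x + h) - f x‖ ≤
      ‖f (x + h) - φ (x + h)‖ + ‖φ (x + h) - φ x‖ + ‖f x - φ x‖ := fun x => by
    calc ‖f (x + h) - f x‖ = ‖(f (x + h) - φ (x + h)) + (φ (x + h) - φ x) - (f x - φ x)‖ := by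
          congr 1; abel
      _ ≤ _ := norm_sub_le_of_le (norm_add_le _ _) le_rfl
  calc ∫ x, ‖f (x + h) - f x‖ ∂μ
      ≤ ∫ x, ‖f (x + h) - φ (x + h)‖ + ‖φ (x + h) - φ x‖ + ‖f x - φ x‖ ∂μ :=
        integral_mono (hfh.sub hf).norm ((i₁.fun_add i₂).fun_add i₃) htri
    _ = ∫ x, ‖f x - φ x‖ ∂μ + ∫ x, ‖φ (x + h) - φ x‖ ∂μ + ∫ x, ‖f x - φ x‖ ∂μ := by
        rw [integral_add (i₁.fun_add i₂) i₃, integral_add i₁ i₂,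
          integral_add_right_eq_self (fun x => ‖f x - φ x‖) h]
    _ < ε := by linarith

end Translation

theorem Function.Antiperiodic.abs_integral_mul_le {G : Type*} [AddGroup G] [MeasurableSpace G]
    [MeasurableAdd G] {μ : Measure G} [μ.IsAddRightInvariant] {s g : G → ℝ} {h : G} {C : ℝ}
    (hs : Antiperiodic s h) (hsm : AEStronglyMeasurable s μ) (hsC : ∀ x, |s x| ≤ C)
    (hg : Integrable g μ) :
    |∫ x, s x * g x ∂μ| ≤ C / 2 * ∫ x, |g (x + h) - g x| ∂μ := by
  have hsg : Integrable (fun x => s x * g x) μ := hg.bdd_mul hsm (ae_of_all _ hsC)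
  have hsgh : Integrable (fun x => s x * g (x + h)) μ :=
    (hg.comp_add_right h).bdd_mul hsm (ae_of_all _ hsC)
  have hflip : ∫ x, s x * g x ∂μ = -∫ x, s x * g (x + h) ∂μ := by
    rw [← integral_add_right_eq_self (μ := μ) (fun x => s x * g x) h, ← integral_neg]
    simp only [hs _, neg_mul]
  have htwice : 2 * ∫ x, s x * g x ∂μ = ∫ x, s x * (g x - g (x + h)) ∂μ := by
    simp only [mul_sub]
    rw [integral_sub hsg hsgh]
    linarith
  have hbound : |∫ x, s x * (g x - g (x + h)) ∂μ| ≤ C * ∫ x, |g (x + h) - g x| ∂μ := by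
    have hdiff : Integrable (fun x => s x * (g x - g (x + h))) μ := by
      simpa only [mul_sub] using hsg.sub' hsgh
    refine abs_integral_le_integral_abs.trans ?_
    rw [← integral_const_mul]
    refine integral_mono hdiff.abs (((hg.comp_add_right h).sub hg).abs.const_mul C) fun x => ?_
    rw [abs_mul, abs_sub_comm]
    exact mul_le_mul_of_nonneg_right (hsC x) (abs_nonneg _)
  rw [← htwice, abs_mul, abs_two] at hbound
  linarith

theorem tendsto_integral_mul_of_antiperiodic {ι G : Type*} [NormedAddCommGroup G] [ProperSpace G]
    [MeasurableSpace G] [BorelSpace G] {μ : Measure G} [μ.IsAddRightInvariant] [μ.Regular]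
    {l : Filter ι} {s : ι → G → ℝ} {h : ι → G} {C : ℝ}
    (hs : ∀ᶠ i in l, Antiperiodic (s i) (h i)) (hsm : ∀ i, AEStronglyMeasurable (s i) μ)
    (hsC : ∀ i x, |s i x| ≤ C) (hh : Tendsto h l (𝓝 0)) {g : G → ℝ} (hg : Integrable g μ) :
    Tendsto (fun i => ∫ x, s i x * g x ∂μ) l (𝓝 0) := by
  have hlim : Tendsto (fun i => C / 2 * ∫ x, |g (x + h i) - g x| ∂μ) l (𝓝 0) := by
    simpa [Real.norm_eq_abs] using
      (hg.tendsto_integral_norm_comp_add_sub.comp hh).const_mul (C / 2)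
  refine squeeze_zero_norm' ?_ hlim
  filter_upwards [hs] with i hi
  exact hi.abs_integral_mul_le (hsm i) (hsC i) hg

noncomputable def squareWave (n : ℕ) (x : ℝ) : ℝ :=
  if Even ⌊2 * (n : ℝ) * x⌋ then 1 / 2 else -(1 / 2)

theorem squareWave_antiperiodic {n : ℕ} (hn : n ≠ 0) :
    Antiperiodic (squareWave n) (2 * (n : ℝ))⁻¹ := by
  intro x
  have hfloor : ⌊2 * (n : ℝ) * (x + (2 * (n : ℝ))⁻¹)⌋ = ⌊2 * (n : ℝ) * x⌋ + 1 := by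
    rw [mul_add, mul_inv_cancel₀ (by positivity), Int.floor_add_one]
  simp only [squareWave, hfloor, Int.even_add_one]
  split_ifs <;> norm_num

theorem measurable_squareWave (n : ℕ) : Measurable (squareWave n) :=
  Measurable.ite ((Int.measurable_floor.comp (measurable_const_mul _))
    (MeasurableSet.of_discrete (s := {k : ℤ | Even k})))
    measurable_const measurable_const

theorem abs_squareWave_le (n : ℕ) (x : ℝ) : |squareWave n x| ≤ 1 / 2 := by
  unfold squareWave; split_ifs <;> norm_num

theorem tendsto_integral_squareWave_mul {g : ℝ → ℝ} (hg : Integrable g) :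
    Tendsto (fun n => ∫ x, squareWave n x * g x) atTop (𝓝 0) :=
  tendsto_integral_mul_of_antiperiodic
    ((eventually_ne_atTop 0).mono fun _ hn => squareWave_antiperiodic hn)
    (fun n => (measurable_squareWave n).aestronglyMeasurable) abs_squareWave_le
    (tendsto_inv_atTop_zero.comp (tendsto_natCast_atTop_atTop.const_mul_atTop two_pos)) hg

theorem mem_biUnion_Ico_iff_even_floor {n : ℕ} (hn : n ≠ 0) {x : ℝ} (hx : x ∈ Ico (0 : ℝ) 1) :
    x ∈ ⋃ i ∈ Finset.range n, Ico (2 * (i : ℝ) / (2 * n)) ((2 * i + 1) / (2 * n)) ↔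
      Even ⌊2 * (n : ℝ) * x⌋ := by
  have hn' : (0 : ℝ) < 2 * n := by positivity
  have hcell : ∀ i : ℕ, x ∈ Ico (2 * (i : ℝ) / (2 * n)) ((2 * i + 1) / (2 * n)) ↔
      ⌊2 * (n : ℝ) * x⌋ = 2 * i := by
    intro i
    rw [Int.floor_eq_iff, mem_Ico, div_le_iff₀ hn', lt_div_iff₀ hn']
    push_cast
    constructor <;> rintro ⟨h₁, h₂⟩ <;> constructor <;> linarith
  simp only [mem_iUnion, Finset.mem_range, hcell, exists_prop]
  constructor
  · rintro ⟨i, -, hi⟩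
    exact ⟨i, by rw [hi]; ring⟩
  · rintro ⟨k, hk⟩
    have h₀ : 0 ≤ ⌊2 * (n : ℝ) * x⌋ := Int.floor_nonneg.2 (by nlinarith [hx.1])
    have h₁ : ⌊2 * (n : ℝ) * x⌋ < 2 * n := Int.floor_lt.2 (by push_cast; nlinarith [hx.2])
    exact ⟨k.toNat, by omega, by omega⟩

theorem ρseq_eq_half_add_squareWave {n : ℕ} (hn : n ≠ 0) {x : ℝ} (hx : x ∈ Ico (0 : ℝ) 1) :
    ρseq n x = 1 / 2 + squareWave n x := by
  by_cases h : Even ⌊2 * (n : ℝ) * x⌋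
  · rw [ρseq, indicator_of_mem ((mem_biUnion_Ico_iff_even_floor hn hx).2 h), squareWave,
      if_pos h]
    norm_num
  · rw [ρseq, indicator_of_notMem (mt (mem_biUnion_Ico_iff_even_floor hn hx).1 h), squareWave,
      if_neg h]
    norm_num

theorem ρseq_mul_one_sub_self (n : ℕ) (x : ℝ) : ρseq n x * (1 - ρseq n x) = 0 := by
  classical
  rw [ρseq, indicator_apply]
  split_ifs <;> simp

theorem tendsto_setIntegral_mul_of_eqOn_half_add_squareWave {f : ℕ → ℝ → ℝ} (c : ℝ)
    (hf : ∀ n ≠ 0, ∀ x ∈ Ioo (0 : ℝ) 1, f n x = 1 / 2 + c * squareWave n x) {g : ℝ → ℝ}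
    (hg : IntegrableOn g (Ioo 0 1)) :
    Tendsto (fun n => ∫ x in Ioo (0 : ℝ) 1, f n x * g x) atTop
      (𝓝 (∫ x in Ioo (0 : ℝ) 1, 1 / 2 * g x)) := by
  have hsw : Tendsto (fun n => ∫ x in Ioo (0 : ℝ) 1, squareWave n x * g x) atTop (𝓝 0) := by
    simpa only [← integral_indicator measurableSet_Ioo, ← indicator_mul_right] using
      tendsto_integral_squareWave_mul (hg.integrable_indicator measurableSet_Ioo)
  have hsplit : ∀ n ≠ 0, ∫ x in Ioo (0 : ℝ) 1, f n x * g x =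
      (∫ x in Ioo (0 : ℝ) 1, 1 / 2 * g x) + c * ∫ x in Ioo (0 : ℝ) 1, squareWave n x * g x := by
    intro n hn
    rw [← integral_const_mul, ← integral_add (hg.const_mul _)
      ((hg.bdd_mul (measurable_squareWave n).aestronglyMeasurable
        (ae_of_all _ (abs_squareWave_le n))).const_mul c)]
    refine setIntegral_congr_fun measurableSet_Ioo fun x hx => ?_
    rw [hf n hn x hx]
    ring
  have hlim := (hsw.const_mul c).const_add (∫ x in Ioo (0 : ℝ) 1, 1 / 2 * g x)
  rw [mul_zero, add_zero] at hlim
  exact hlim.congr' ((eventually_ne_atTop 0).mono fun n hn => (hsplit n hn).symm)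

theorem FL_ρseq (δ : ℝ) (n : ℕ) :
    FL (Ioo 0 1) δ (ρseq n) (fun x => 1 - ρseq n x) = (1 + δ) / 2 := by
  simp [FL, ρseq_mul_one_sub_self]

theorem FL_half (δ : ℝ) :
    FL (Ioo 0 1) δ (fun _ => 1 / 2) (fun _ => 1 / 2) = (1 + δ) / 2 - δ / 4 := by
  simp only [FL, setIntegral_const, Real.volume_real_Ioo, smul_eq_mul]
  norm_num
  ring

/-- For δ ∈ (-1,0): the segregated sequence (ρⁿ, 1−ρⁿ) converges weakly in L²(0,1) to
(1/2, 1/2), has constant energy (1+δ)/2, while the weak limit has strictly larger energy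
(1+δ)/2 − δ/4; hence F_L is not sequentially weakly lower semicontinuous. -/
theorem stmt5 (δ : ℝ) (hδ : δ ∈ Set.Ioo (-1 : ℝ) 0) :
    (∀ n : ℕ, ∀ᵐ x ∂(volume.restrict (Set.Ioo (0:ℝ) 1)),
      ρseq n x * (1 - ρseq n x) = 0) ∧
    (∀ g : ℝ → ℝ, MemLp g 2 (volume.restrict (Set.Ioo (0:ℝ) 1)) →
      Tendsto (fun n => ∫ x in Set.Ioo (0:ℝ) 1, ρseq n x * g x) atTop
        (nhds (∫ x in Set.Ioo (0:ℝ) 1, (1/2) * g x))) ∧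
    (∀ g : ℝ → ℝ, MemLp g 2 (volume.restrict (Set.Ioo (0:ℝ) 1)) →
      Tendsto (fun n => ∫ x in Set.Ioo (0:ℝ) 1, (1 - ρseq n x) * g x) atTop
        (nhds (∫ x in Set.Ioo (0:ℝ) 1, (1/2) * g x))) ∧
    (∀ n : ℕ, 1 ≤ n →
      FL (Set.Ioo (0:ℝ) 1) δ (ρseq n) (fun x => 1 - ρseq n x) = (1+δ)/2) ∧
    FL (Set.Ioo (0:ℝ) 1) δ (fun _ => 1/2) (fun _ => 1/2) = (1+δ)/2 - δ/4 ∧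
    (1+δ)/2 < (1+δ)/2 - δ/4 := by
  refine ⟨fun n => ae_of_all _ (ρseq_mul_one_sub_self n), fun g hg => ?_, fun g hg => ?_,
    fun n _ => FL_ρseq δ n, FL_half δ, by linarith [hδ.2]⟩
  · refine tendsto_setIntegral_mul_of_eqOn_half_add_squareWave 1 (fun n hn x hx => ?_)
      (hg.integrable one_le_two)
    rw [ρseq_eq_half_add_squareWave hn (Ioo_subset_Ico_self hx), one_mul]
  · refine tendsto_setIntegral_mul_of_eqOn_half_add_squareWave (-1) (fun n hn x hx => ?_)
      (hg.integrable one_le_two)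
    rw [ρseq_eq_half_add_squareWave hn (Ioo_subset_Ico_self hx)]
    ring
end

section
/- Let δ ∈ (-1,0) and (ρ,η) ∈ X a minimiser of F_L. Then |supp(ρ) ∩ supp(η)| = 0, i.e. ρη = 0 almost everywhere in Ω. -/
open MeasureTheory

/-!
The energy only sees `ρ + η` and `∫ ρη`. Cutting the total density `ρ + η` at a point `c`
chosen (intermediate value theorem) so that the left part has mass `m₁` gives an admissible
pair `(σ, τ)` with `σ + τ = ρ + η` and `στ = 0`; hence `F_L(ρ,η) = F_L(σ,τ) − δ∫ρη`.
Minimality and `δ < 0` force `∫ρη ≤ 0`, and since `ρη ≥ 0` this means `ρη = 0` a.e.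
-/

open Set

lemma exists_setIntegral_inter_Iio_eq {a b : ℝ} (hab : a ≤ b) {f : ℝ → ℝ}
    (hf : IntegrableOn f (Ioo a b)) {t : ℝ} (ht : t ∈ Icc 0 (∫ x in Ioo a b, f x)) :
    ∃ c, ∫ x in Ioo a b ∩ Iio c, f x = t := by
  set G : ℝ → ℝ := fun c => ∫ x in a..c, f x
  have hG : ∀ c, a ≤ c → G c = ∫ x in Ioo a c, f x := fun c hc => by
    simp only [G, intervalIntegral.integral_of_le hc, integral_Ioc_eq_integral_Ioo]
  have hcont : ContinuousOn G (Icc a b) := by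
    rw [← uIcc_of_le hab]
    exact intervalIntegral.continuousOn_primitive_interval
      ((integrableOn_Icc_iff_integrableOn_Ioo).mpr (by rwa [min_eq_left hab, max_eq_right hab]))
  have hGa : G a = 0 := intervalIntegral.integral_same
  obtain ⟨c, hc, hGc⟩ := intermediate_value_Icc hab hcont (by rwa [hGa, hG b hab])
  refine ⟨c, ?_⟩
  rw [Ioo_inter_Iio, min_eq_right hc.2, ← hG c hc.1, hGc]

lemma exists_segregated_InX {a b m₁ m₂ : ℝ} (hab : a ≤ b) {ρ η : ℝ → ℝ}
    (hX : InX (Ioo a b) m₁ m₂ ρ η) :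
    ∃ σ τ : ℝ → ℝ, InX (Ioo a b) m₁ m₂ σ τ ∧
      (∀ x, σ x + τ x = ρ x + η x) ∧ ∀ x, σ x * τ x = 0 := by
  obtain ⟨hρ2, hη2, hρ0, hη0, hρm, hηm⟩ := hX
  set f : ℝ → ℝ := fun x => ρ x + η x
  have hf2 : MemLp f 2 (volume.restrict (Ioo a b)) := hρ2.add hη2
  have hf : IntegrableOn f (Ioo a b) := hf2.integrable one_le_two
  have hf0 : ∀ᵐ x ∂(volume.restrict (Ioo a b)), 0 ≤ f x := by
    filter_upwards [hρ0, hη0] with x h₁ h₂ using add_nonneg h₁ h₂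
  have hfm : ∫ x in Ioo a b, f x = m₁ + m₂ := by
    rw [integral_add (hρ2.integrable one_le_two) (hη2.integrable one_le_two), hρm, hηm]
  have hm₁ : m₁ ∈ Icc 0 (∫ x in Ioo a b, f x) := by
    rw [hfm, ← hρm, ← hηm]
    exact ⟨integral_nonneg_of_ae hρ0, le_add_of_nonneg_right (integral_nonneg_of_ae hη0)⟩
  obtain ⟨c, hc⟩ := exists_setIntegral_inter_Iio_eq hab hf hm₁
  have hσm : ∫ x in Ioo a b, (Iio c).indicator f x = m₁ := by
    rw [setIntegral_indicator measurableSet_Iio, hc]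
  have hσ2 := hf2.indicator (s := Iio c) measurableSet_Iio
  have hτ2 := hf2.indicator (s := (Iio c)ᶜ) measurableSet_Iio.compl
  refine ⟨(Iio c).indicator f, (Iio c)ᶜ.indicator f, ⟨hσ2, hτ2, ?_, ?_, hσm, ?_⟩,
    indicator_self_add_compl_apply _ f, fun x => ?_⟩
  · filter_upwards [hf0] with x hx using indicator_nonneg (fun _ _ => hx) x
  · filter_upwards [hf0] with x hx using indicator_nonneg (fun _ _ => hx) x
  · have hsplit := integral_add (hσ2.integrable one_le_two) (hτ2.integrable one_le_two)
    simp only [indicator_self_add_compl_apply] at hsplit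
    linarith
  · by_cases hx : x ∈ Iio c
    · rw [indicator_of_notMem (notMem_compl_iff.mpr hx), mul_zero]
    · rw [indicator_of_notMem hx, zero_mul]

lemma FL_eq_FL_sub_of_add_eq {Ω : Set ℝ} {δ : ℝ} {ρ η σ τ : ℝ → ℝ}
    (hsum : ∀ x, σ x + τ x = ρ x + η x) (hprod : ∀ x, σ x * τ x = 0) :
    FL Ω δ ρ η = FL Ω δ σ τ - δ * ∫ x in Ω, ρ x * η x := by
  simp only [FL, hsum, hprod, integral_zero]
  ring

theorem stmt9_general (a b δ m₁ m₂ : ℝ) (hab : a < b) (hδ : δ ∈ Set.Ioo (-1 : ℝ) 0)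
    (ρ η : ℝ → ℝ)
    (hX : InX (Set.Ioo a b) m₁ m₂ ρ η)
    (hmin : ∀ σ τ : ℝ → ℝ, InX (Set.Ioo a b) m₁ m₂ σ τ →
      FL (Set.Ioo a b) δ ρ η ≤ FL (Set.Ioo a b) δ σ τ) :
    ∀ᵐ x ∂(volume.restrict (Set.Ioo a b)), ρ x * η x = 0 := by
  obtain ⟨σ, τ, hστ, hsum, hprod⟩ := exists_segregated_InX hab.le hX
  have hle := hmin σ τ hστ
  rw [FL_eq_FL_sub_of_add_eq hsum hprod] at hle
  have hnonpos : ∫ x in Ioo a b, ρ x * η x ≤ 0 := by nlinarith [hδ.2]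
  obtain ⟨hρ2, hη2, hρ0, hη0, -, -⟩ := hX
  have hnn : 0 ≤ᵐ[volume.restrict (Ioo a b)] fun x => ρ x * η x := by
    filter_upwards [hρ0, hη0] with x h₁ h₂ using mul_nonneg h₁ h₂
  exact (integral_eq_zero_iff_of_nonneg_ae hnn (hρ2.integrable_mul hη2)).mp
    (le_antisymm hnonpos (integral_nonneg_of_ae hnn))

/-- For δ ∈ (-1,0), any minimiser of F_L over X is segregated: ρη = 0 a.e. in Ω. -/
theorem stmt9 (a b δ m₁ m₂ : ℝ) (hab : a < b) (hδ : δ ∈ Set.Ioo (-1 : ℝ) 0)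
    (hm₁ : 0 < m₁) (hm₂ : 0 < m₂) (ρ η : ℝ → ℝ)
    (hX : InX (Set.Ioo a b) m₁ m₂ ρ η)
    (hmin : ∀ σ τ : ℝ → ℝ, InX (Set.Ioo a b) m₁ m₂ σ τ →
      FL (Set.Ioo a b) δ ρ η ≤ FL (Set.Ioo a b) δ σ τ) :
    ∀ᵐ x ∂(volume.restrict (Set.Ioo a b)), ρ x * η x = 0 :=
  stmt9_general a b δ m₁ m₂ hab hδ ρ η hX hmin
end

section
/- Let δ < -1. Then inf over X of F_L(ρ,η) = ((1+δ)/2)∫_Ω(ρ+η)² dx − δ∫_Ω ρη dx equals −∞: there exists a sequence (ρₙ,ηₙ) ∈ X with F_L(ρₙ,ηₙ) → −∞. -/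
open MeasureTheory Filter

/-! Take `ρ` and `η` to be constant plateaus of width `e` at the two ends of `Ω`.
The supports are disjoint, so the cross term vanishes and
`F_L = ((1+δ)/2) (m₁² + m₂²) / e`, which tends to `-∞` as `e → 0` because `1 + δ < 0`. -/

lemma FL_eq_of_mul_eq_zero {Ω : Set ℝ} {δ : ℝ} {ρ η : ℝ → ℝ} (hρη : ∀ x, ρ x * η x = 0)
    (hρ : Integrable (fun x => ρ x ^ 2) (volume.restrict Ω))
    (hη : Integrable (fun x => η x ^ 2) (volume.restrict Ω)) :
    FL Ω δ ρ η = (1 + δ) / 2 * ((∫ x in Ω, ρ x ^ 2) + ∫ x in Ω, η x ^ 2) := by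
  have hsq : ∀ x, (ρ x + η x) ^ 2 = ρ x ^ 2 + η x ^ 2 := fun x => by
    linear_combination 2 * hρη x
  simp only [FL, hsq, hρη, integral_zero, integral_add hρ hη, mul_zero, sub_zero]

noncomputable def plateau (u e m : ℝ) : ℝ → ℝ :=
  (Set.Ioo u (u + e)).indicator fun _ => m / e

namespace plateau

variable {u e m : ℝ}

lemma nonneg (hm : 0 ≤ m) (he : 0 ≤ e) (x : ℝ) : 0 ≤ plateau u e m x :=
  Set.indicator_nonneg (fun _ _ => div_nonneg hm he) x

lemma memLp (Ω : Set ℝ) (p : ENNReal) : MemLp (plateau u e m) p (volume.restrict Ω) :=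
  memLp_indicator_const p measurableSet_Ioo _ <| Or.inr
    ((Measure.restrict_apply_le _ _).trans_lt measure_Ioo_lt_top).ne

lemma sq_apply (x : ℝ) : plateau u e m x ^ 2 = plateau u e (m ^ 2 / e) x := by
  by_cases hx : x ∈ Set.Ioo u (u + e)
  · simp only [plateau, Set.indicator_of_mem hx]
    ring
  · simp [plateau, hx]

lemma setIntegral {Ω : Set ℝ} (he : 0 < e) (hΩ : Set.Ioo u (u + e) ⊆ Ω) :
    ∫ x in Ω, plateau u e m x = m := by
  rw [plateau, integral_indicator_const _ measurableSet_Ioo,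
    measureReal_restrict_apply measurableSet_Ioo, Set.inter_eq_self_of_subset_left hΩ,
    Real.volume_real_Ioo_of_le (by linarith), smul_eq_mul]
  field_simp
  ring

lemma setIntegral_sq {Ω : Set ℝ} (he : 0 < e) (hΩ : Set.Ioo u (u + e) ⊆ Ω) :
    ∫ x in Ω, plateau u e m x ^ 2 = m ^ 2 / e := by
  simp only [sq_apply, setIntegral he hΩ]

lemma mul_eq_zero_of_le {v f m' : ℝ} (huv : u + e ≤ v) (x : ℝ) :
    plateau u e m x * plateau v f m' x = 0 := by
  by_cases hx : x ∈ Set.Ioo u (u + e)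
  · have hx' : x ∉ Set.Ioo v (v + f) := fun h => by linarith [hx.2, h.1]
    simp [plateau, hx']
  · simp [plateau, hx]

end plateau

lemma inX_and_FL_endPlateaus {a b δ m₁ m₂ e : ℝ} (hm₁ : 0 ≤ m₁) (hm₂ : 0 ≤ m₂) (he : 0 < e)
    (heab : 2 * e ≤ b - a) :
    InX (Set.Ioo a b) m₁ m₂ (plateau a e m₁) (plateau (b - e) e m₂) ∧
      FL (Set.Ioo a b) δ (plateau a e m₁) (plateau (b - e) e m₂) =
        (1 + δ) / 2 * (m₁ ^ 2 + m₂ ^ 2) / e := by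
  have hleft : Set.Ioo a (a + e) ⊆ Set.Ioo a b := Set.Ioo_subset_Ioo le_rfl (by linarith)
  have hright : Set.Ioo (b - e) (b - e + e) ⊆ Set.Ioo a b :=
    Set.Ioo_subset_Ioo (by linarith) (by linarith)
  refine ⟨⟨plateau.memLp _ _, plateau.memLp _ _, .of_forall (plateau.nonneg hm₁ he.le),
    .of_forall (plateau.nonneg hm₂ he.le), plateau.setIntegral he hleft,
    plateau.setIntegral he hright⟩, ?_⟩
  rw [FL_eq_of_mul_eq_zero (plateau.mul_eq_zero_of_le (by linarith))
      ((plateau.memLp _ 2).integrable_sq) ((plateau.memLp _ 2).integrable_sq),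
    plateau.setIntegral_sq he hleft, plateau.setIntegral_sq he hright]
  ring

/-- For δ < −1 the infimum of F_L over X is −∞: there is a sequence in X whose
energy tends to −∞. -/
theorem stmt10 (a b δ m₁ m₂ : ℝ) (hab : a < b) (hδ : δ < -1)
    (hm₁ : 0 < m₁) (hm₂ : 0 < m₂) :
    ∃ ρ η : ℕ → ℝ → ℝ, (∀ n, InX (Set.Ioo a b) m₁ m₂ (ρ n) (η n)) ∧
      Tendsto (fun n => FL (Set.Ioo a b) δ (ρ n) (η n)) atTop atBot := by
  set e : ℕ → ℝ := fun n => (b - a) / (n + 2)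
  have he : ∀ n, 0 < e n := fun n => div_pos (by linarith) (by positivity)
  have heab : ∀ n, 2 * e n ≤ b - a := fun n => by
    rw [mul_div_assoc', div_le_iff₀ (by positivity)]
    nlinarith [(n.cast_nonneg : (0 : ℝ) ≤ n)]
  have hplateaus n := inX_and_FL_endPlateaus (δ := δ) hm₁.le hm₂.le (he n) (heab n)
  refine ⟨fun n => plateau a (e n) m₁, fun n => plateau (b - e n) (e n) m₂,
    fun n => (hplateaus n).1, ?_⟩
  have hFL : ∀ n, FL (Set.Ioo a b) δ (plateau a (e n) m₁) (plateau (b - e n) (e n) m₂) =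
      (1 + δ) / 2 * (m₁ ^ 2 + m₂ ^ 2) * ((n + 2) / (b - a)) := fun n => by
    rw [(hplateaus n).2, div_div_eq_mul_div, mul_div_assoc]
  simp only [hFL]
  refine Tendsto.const_mul_atTop_of_neg ?_ (Tendsto.atTop_div_const (by linarith) ?_)
  · nlinarith [sq_nonneg m₂, mul_pos hm₁ hm₁]
  · exact tendsto_atTop_add_const_right _ _ tendsto_natCast_atTop_atTop
end
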